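/- arXiv:math/0511070 — 3 statements merged into one kernel-verified Lean document; each statement's English description precedes it below -/
import Mathlib

section
/- Suppose n ≥ 1, λ₁ > 0, 0 < p₁ < p₂ with p₂ > 4/n, and let K, P₁, P₂ ≥ 0 be real numbers (representing ‖∇u‖₂², ‖u‖_{p₁+2}^{p₁+2}, ‖u‖_{p₂+2}^{p₂+2}). Let E = K/2 + (λ₁/(p₁+2))P₁ + (λ₂/(p₂+2))P₂ with λ₂ < 0, and suppose E < 0. Then the quantity y' := -2K - n λ₁ p₁ P₁/(p₁+2) - n λ₂ p₂ P₂/(p₂+2) satisfies y' ≥ ((p₂ n - 4)/2)·K. -/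
theorem stmt_4 (n : ℕ) (hn : 1 ≤ n) (lam1 lam2 p1 p2 K P1 P2 E : ℝ)
    (hlam1 : 0 < lam1) (hlam2 : lam2 < 0) (hp1 : 0 < p1) (hp12 : p1 < p2)
    (hp2 : 4 / (n : ℝ) < p2)
    (hK : 0 ≤ K) (hP1 : 0 ≤ P1) (hP2 : 0 ≤ P2)
    (hE : E = K / 2 + (lam1 / (p1 + 2)) * P1 + (lam2 / (p2 + 2)) * P2)
    (hEneg : E < 0) :
    -2 * K - (n : ℝ) * lam1 * p1 * P1 / (p1 + 2) - (n : ℝ) * lam2 * p2 * P2 / (p2 + 2)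
      ≥ ((p2 * (n : ℝ) - 4) / 2) * K := by
  have hn' : (1:ℝ) ≤ n := by exact_mod_cast hn
  have hnpos : (0:ℝ) < n := by linarith
  have hnp2 : 4 < (n:ℝ) * p2 := by
    rw [div_lt_iff₀ hnpos] at hp2; linarith [hp2]
  have h1 : (0:ℝ) < p1 + 2 := by linarith
  have h2 : (0:ℝ) < p2 + 2 := by linarith
  set a := P1 / (p1 + 2) with ha
  set b := P2 / (p2 + 2) with hb
  have hann : 0 ≤ a := div_nonneg hP1 h1.le
  have hbnn : 0 ≤ b := div_nonneg hP2 h2.le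
  have hE' : K / 2 + lam1 * a + lam2 * b < 0 := by
    have : lam1 / (p1+2) * P1 = lam1 * a := by rw [ha]; ring
    have h2' : lam2 / (p2+2) * P2 = lam2 * b := by rw [hb]; ring
    rw [hE] at hEneg; linarith [hEneg, this ▸ (le_refl (lam1*a)), h2']
  have g1 : (n:ℝ) * lam1 * p1 * P1 / (p1+2) = (n:ℝ) * lam1 * p1 * a := by
    rw [ha]; ring
  have g2 : (n:ℝ) * lam2 * p2 * P2 / (p2+2) = (n:ℝ) * lam2 * p2 * b := by
    rw [hb]; ring
  rw [g1, g2]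
  nlinarith [mul_nonneg (mul_nonneg hnpos.le hlam1.le) (mul_nonneg (sub_pos.mpr hp12).le hann),
    mul_lt_mul_of_pos_left hE' (mul_pos hnpos (by linarith : (0:ℝ) < p2)), hK, hnp2,
    mul_nonneg hK (by linarith : (0:ℝ) ≤ (n:ℝ)*p2 - 4)]
end

section
/- Suppose n ≥ 1, λ₁ < 0, 4/n < p₁ < p₂, λ₂ < 0, and let K, P₁, P₂ ≥ 0 be reals with E = K/2 + (λ₁/(p₁+2))P₁ + (λ₂/(p₂+2))P₂ < 0. Then -2K - nλ₁p₁P₁/(p₁+2) - nλ₂p₂P₂/(p₂+2) ≥ ((p₁ n - 4)/2)·K. -/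
theorem stmt_5 (n : ℕ) (hn : 1 ≤ n) (lam1 lam2 p1 p2 K P1 P2 E : ℝ)
    (hlam1 : lam1 < 0) (hlam2 : lam2 < 0) (hp1 : 4 / (n : ℝ) < p1) (hp12 : p1 < p2)
    (hK : 0 ≤ K) (hP1 : 0 ≤ P1) (hP2 : 0 ≤ P2)
    (hE : E = K / 2 + (lam1 / (p1 + 2)) * P1 + (lam2 / (p2 + 2)) * P2)
    (hEneg : E < 0) :
    -2 * K - (n : ℝ) * lam1 * p1 * P1 / (p1 + 2) - (n : ℝ) * lam2 * p2 * P2 / (p2 + 2)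
      ≥ ((p1 * (n : ℝ) - 4) / 2) * K := by
  have hn0 : (0:ℝ) < n := by exact_mod_cast hn
  have hp1pos : 0 < p1 := lt_trans (by positivity) hp1
  have h1 : (0:ℝ) < p1 + 2 := by linarith
  have h2 : (0:ℝ) < p2 + 2 := by linarith
  have key : -2 * K - (n : ℝ) * lam1 * p1 * P1 / (p1 + 2) - (n : ℝ) * lam2 * p2 * P2 / (p2 + 2)
      = -((n:ℝ) * p1) * E + ((n:ℝ) * p1 / 2 - 2) * K
        + (n:ℝ) * (lam2 * (p1 - p2)) * (P2 / (p2 + 2)) := by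
    subst hE; field_simp; ring
  rw [key]
  have hnp1 : 4 < (n:ℝ) * p1 := by
    have := (div_lt_iff₀ hn0).mp hp1
    linarith
  have hE' : 0 < -((n:ℝ) * p1) * E := by
    have : 0 < (n:ℝ) * p1 := by linarith
    nlinarith
  have hterm : 0 ≤ (n:ℝ) * (lam2 * (p1 - p2)) * (P2 / (p2 + 2)) := by
    have : 0 ≤ lam2 * (p1 - p2) := by nlinarith
    positivity
  nlinarith
end

section
/- Let n ≥ 1, 0 < p₁ ≤ 4/n < p₂, λ₁ < 0, λ₂ < 0. There exist constants ε > 0 and C > 0 (depending on n, p₁, p₂, λ₁, λ₂) such that for all reals K, P₁, P₂, M ≥ 0 satisfying P₁ ≤ C(δ)M + δP₂ for appropriate Young-type constants, if E := K/2 + (λ₁/(p₁+2))P₁ + (λ₂/(p₂+2))P₂ satisfies E + C·M < 0, then -2K - nλ₁p₁P₁/(p₁+2) - nλ₂p₂P₂/(p₂+2) ≥ ε·K. -/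
/-! Write `α = -λ₁/(p₁+2)` and `β = -λ₂/(p₂+2)`, both positive. Negative energy, after the `P₁`
term is traded for `M` and `δ P₂` by Young's inequality (with `C = α C_δ` cancelling the mass),
gives `K ≤ 2(αδ + β) P₂`. The `P₁` term of the virial is nonnegative, and because `n p₂ > 4` the
constants can be chosen with `2(2 + ε)(αδ + β) = n p₂ β`, so the `P₂` term alone dominates
`(2 + ε) K`. -/

section VirialBound

variable {K P₁ P₂ M α β δ c ε a b : ℝ}

lemma kinetic_le_of_energy_neg (hα : 0 ≤ α) (hYoung : P₁ ≤ c * M + δ * P₂)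
    (hE : K / 2 - α * P₁ - β * P₂ + α * c * M < 0) :
    K ≤ 2 * (α * δ + β) * P₂ := by
  have := mul_le_mul_of_nonneg_left hYoung hα
  linarith

lemma mul_le_virial_of_energy_neg (hα : 0 ≤ α) (hP₁ : 0 ≤ P₁) (hP₂ : 0 ≤ P₂) (ha : 0 ≤ a)
    (hε : 0 ≤ ε) (hb : 2 * (2 + ε) * (α * δ + β) ≤ b * β) (hYoung : P₁ ≤ c * M + δ * P₂)
    (hE : K / 2 - α * P₁ - β * P₂ + α * c * M < 0) :
    ε * K ≤ -2 * K + a * α * P₁ + b * β * P₂ := by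
  have hK := kinetic_le_of_energy_neg hα hYoung hE
  have hP₁_term : 0 ≤ a * α * P₁ := by positivity
  calc ε * K = (2 + ε) * K - 2 * K := by ring
    _ ≤ (2 + ε) * (2 * (α * δ + β) * P₂) - 2 * K := by gcongr
    _ = 2 * (2 + ε) * (α * δ + β) * P₂ - 2 * K := by ring
    _ ≤ b * β * P₂ - 2 * K := by gcongr
    _ ≤ -2 * K + a * α * P₁ + b * β * P₂ := by linarith

end VirialBound

lemma two_mul_two_add_mul_eq {s α β : ℝ} (hα : α ≠ 0) (hs : s + 4 ≠ 0) :
    2 * (2 + (s - 4) / 4) * (α * ((s - 4) * β / ((s + 4) * α)) + β) = s * β := by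
  field_simp
  ring

theorem stmt_6_general (n : ℕ) (hn : 1 ≤ n) (lam1 lam2 p1 p2 : ℝ)
    (hlam1 : lam1 < 0) (hlam2 : lam2 < 0)
    (hp1 : 0 < p1) (hp2 : 4 / (n : ℝ) < p2) :
    ∃ ε > (0 : ℝ), ∃ C > (0 : ℝ), ∃ δ > (0 : ℝ), ∃ Cδ > (0 : ℝ),
      ∀ K P1 P2 M : ℝ, 0 ≤ K → 0 ≤ P1 → 0 ≤ P2 → 0 ≤ M →
        P1 ≤ Cδ * M + δ * P2 →
        K / 2 + (lam1 / (p1 + 2)) * P1 + (lam2 / (p2 + 2)) * P2 + C * M < 0 →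
        -2 * K - (n : ℝ) * lam1 * p1 * P1 / (p1 + 2)
            - (n : ℝ) * lam2 * p2 * P2 / (p2 + 2) ≥ ε * K := by
  have hn₀ : (0 : ℝ) < n := by exact_mod_cast hn
  have hs : 4 < (n : ℝ) * p2 := (div_lt_iff₀' hn₀).1 hp2
  have hp2₀ : 0 < p2 := (by positivity : (0 : ℝ) ≤ 4 / n).trans_lt hp2
  have hα : 0 < -lam1 / (p1 + 2) := div_pos (by linarith) (by linarith)
  have hβ : 0 < -lam2 / (p2 + 2) := div_pos (by linarith) (by linarith)
  refine ⟨(n * p2 - 4) / 4, by linarith, -lam1 / (p1 + 2), hα,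
    (n * p2 - 4) * (-lam2 / (p2 + 2)) / ((n * p2 + 4) * (-lam1 / (p1 + 2))),
    div_pos (mul_pos (by linarith) hβ) (mul_pos (by linarith) hα), 1, one_pos, ?_⟩
  intro K P1 P2 M _ hP1 hP2 _ hYoung hE
  have hb := (two_mul_two_add_mul_eq (s := n * p2) (β := -lam2 / (p2 + 2)) hα.ne'
    (by linarith)).le
  have key := mul_le_virial_of_energy_neg (K := K) (a := n * p1) hα.le hP1 hP2 (by positivity)
    (by linarith) hb hYoung (lt_of_eq_of_lt (by ring) hE)
  exact key.trans_eq (by ring)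

theorem stmt_6 (n : ℕ) (hn : 1 ≤ n) (lam1 lam2 p1 p2 : ℝ)
    (hlam1 : lam1 < 0) (hlam2 : lam2 < 0)
    (hp1 : 0 < p1) (hp1' : p1 ≤ 4 / (n : ℝ)) (hp2 : 4 / (n : ℝ) < p2) :
    ∃ ε > (0 : ℝ), ∃ C > (0 : ℝ), ∃ δ > (0 : ℝ), ∃ Cδ > (0 : ℝ),
      ∀ K P1 P2 M : ℝ, 0 ≤ K → 0 ≤ P1 → 0 ≤ P2 → 0 ≤ M →
        P1 ≤ Cδ * M + δ * P2 →
        K / 2 + (lam1 / (p1 + 2)) * P1 + (lam2 / (p2 + 2)) * P2 + C * M < 0 →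
        -2 * K - (n : ℝ) * lam1 * p1 * P1 / (p1 + 2)
            - (n : ℝ) * lam2 * p2 * P2 / (p2 + 2) ≥ ε * K :=
  stmt_6_general n hn lam1 lam2 p1 p2 hlam1 hlam2 hp1 hp2
end
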